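/- For elements a, b of a finite Coxeter group W: a ≤ b in absolute order if and only if a^{-1} b ≤ b, and in that case the interval [a, b] in absolute order is isomorphic as a poset to the interval [1, a^{-1} b]. -/

import Mathlib

open CoxeterSystem

/-- The reflection length `l_T` of an element of a Coxeter group: the least `k` such that
`w` is a product of `k` reflections. -/
noncomputable def reflLen {B W : Type*} [Group W] {M : CoxeterMatrix B}
    (cs : CoxeterSystem M W) (w : W) : ℕ :=
  sInf {k | ∃ l : List W, l.length = k ∧ (∀ t ∈ l, cs.IsReflection t) ∧ l.prod = w}

/-- The absolute order on a Coxeter group: `u ≤ v` iff `l_T(u) + l_T(u⁻¹v) = l_T(v)`. -/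
def absLe {B W : Type*} [Group W] {M : CoxeterMatrix B}
    (cs : CoxeterSystem M W) (u v : W) : Prop :=
  reflLen cs u + reflLen cs (u⁻¹ * v) = reflLen cs v

section Aux

variable {B W : Type*} [Group W] {M : CoxeterMatrix B} (cs : CoxeterSystem M W)

lemma reflLen_set_nonempty (w : W) :
    {k | ∃ l : List W, l.length = k ∧ (∀ t ∈ l, cs.IsReflection t) ∧ l.prod = w}.Nonempty := by
  obtain ⟨ω, rfl⟩ := cs.wordProd_surjective w
  refine ⟨ω.length, ω.map cs.simple, by simp, ?_, rfl⟩
  intro t ht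
  obtain ⟨i, _, rfl⟩ := List.mem_map.mp ht
  exact cs.isReflection_simple i

lemma reflLen_spec (w : W) :
    ∃ l : List W, l.length = reflLen cs w ∧ (∀ t ∈ l, cs.IsReflection t) ∧ l.prod = w :=
  Nat.sInf_mem (reflLen_set_nonempty cs w)

lemma reflLen_le {w : W} {l : List W} (hl : ∀ t ∈ l, cs.IsReflection t) (hp : l.prod = w) :
    reflLen cs w ≤ l.length :=
  Nat.sInf_le ⟨l, rfl, hl, hp⟩

@[simp] lemma reflLen_one : reflLen cs 1 = 0 :=
  Nat.le_zero.mp (reflLen_le cs (l := []) (by simp) (by simp))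

lemma reflLen_mul_le (u v : W) : reflLen cs (u * v) ≤ reflLen cs u + reflLen cs v := by
  obtain ⟨l₁, h₁, hr₁, hp₁⟩ := reflLen_spec cs u
  obtain ⟨l₂, h₂, hr₂, hp₂⟩ := reflLen_spec cs v
  have := reflLen_le cs (l := l₁ ++ l₂) (by
    intro t ht; rcases List.mem_append.mp ht with h | h
    · exact hr₁ t h
    · exact hr₂ t h) (by rw [List.prod_append, hp₁, hp₂])
  simpa [h₁, h₂] using this

lemma reflLen_inv_le (w : W) : reflLen cs w⁻¹ ≤ reflLen cs w := by
  obtain ⟨l, h, hr, hp⟩ := reflLen_spec cs w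
  have : (l.reverse).prod = w⁻¹ := by
    rw [← hp]; clear hp h
    induction l with
    | nil => simp
    | cons t l ih =>
      have ht := hr t List.mem_cons_self
      simp only [List.reverse_cons, List.prod_append, List.prod_cons, List.prod_nil,
        ih (fun u hu => hr u (List.mem_cons_of_mem _ hu)), mul_inv_rev, ht.inv, mul_one]
  have := reflLen_le cs (l := l.reverse) (by
    intro t ht; exact hr t (List.mem_reverse.mp ht)) this
  simpa [h] using this

lemma reflLen_inv (w : W) : reflLen cs w⁻¹ = reflLen cs w :=
  le_antisymm (reflLen_inv_le cs w) (by simpa using reflLen_inv_le cs w⁻¹)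

lemma reflLen_conj_le (w x : W) : reflLen cs (x * w * x⁻¹) ≤ reflLen cs w := by
  obtain ⟨l, h, hr, hp⟩ := reflLen_spec cs w
  have hp' : (l.map fun t => x * t * x⁻¹).prod = x * w * x⁻¹ := by
    rw [← hp]; clear hp hr h
    induction l with
    | nil => simp
    | cons a l ih =>
      simp only [List.map_cons, List.prod_cons, ih]
      group
  have := reflLen_le cs (l := l.map fun t => x * t * x⁻¹) (by
    intro t ht
    obtain ⟨u, hu, rfl⟩ := List.mem_map.mp ht
    exact (hr u hu).conj x) hp'
  simpa [h] using this

lemma reflLen_conj (w x : W) : reflLen cs (x * w * x⁻¹) = reflLen cs w := by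
  refine le_antisymm (reflLen_conj_le cs w x) ?_
  have := reflLen_conj_le cs (x * w * x⁻¹) x⁻¹
  have h : x⁻¹ * (x * w * x⁻¹) * x⁻¹⁻¹ = w := by group
  rwa [h] at this

end Aux

/-- `a ≤ b` iff `a⁻¹b ≤ b` in absolute order, and in that case the interval `[a, b]` is
isomorphic as a poset to the interval `[1, a⁻¹b]`. -/
theorem absLe_interval_iso {B W : Type*} [Group W] [Finite W] {M : CoxeterMatrix B}
    (cs : CoxeterSystem M W) (a b : W) :
    (absLe cs a b ↔ absLe cs (a⁻¹ * b) b) ∧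
      (absLe cs a b →
        ∃ e : {z : W // absLe cs a z ∧ absLe cs z b} ≃
              {z : W // absLe cs 1 z ∧ absLe cs z (a⁻¹ * b)},
          ∀ x y, absLe cs x.1 y.1 ↔ absLe cs (e x).1 (e y).1) := by
  constructor
  · unfold absLe
    have h1 : (a⁻¹ * b)⁻¹ * b = b⁻¹ * a * b⁻¹⁻¹ := by group
    rw [h1, reflLen_conj]
    omega
  · intro hab
    unfold absLe at hab
    refine ⟨⟨fun z => ⟨a⁻¹ * z.1, ?_, ?_⟩, fun z => ⟨a * z.1, ?_, ?_⟩, ?_, ?_⟩, ?_⟩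
    · unfold absLe
      simp
    · have hz1 := z.2.1; have hz2 := z.2.2
      unfold absLe at hz1 hz2 ⊢
      have h1 : (a⁻¹ * z.1)⁻¹ * (a⁻¹ * b) = z.1⁻¹ * b := by group
      rw [h1]
      omega
    · have hz1 := z.2.1; have hz2 := z.2.2
      unfold absLe at hz1 hz2 ⊢
      have h1 : z.1⁻¹ * (a⁻¹ * b) = (a * z.1)⁻¹ * b := by group
      have h2 : a⁻¹ * (a * z.1) = z.1 := by group
      rw [h2]
      have k1 := reflLen_mul_le cs a z.1
      have k2 := reflLen_mul_le cs (a * z.1) ((a * z.1)⁻¹ * b)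
      rw [show a * z.1 * ((a * z.1)⁻¹ * b) = b by group] at k2
      rw [h1] at hz2
      omega
    · have hz1 := z.2.1; have hz2 := z.2.2
      unfold absLe at hz1 hz2 ⊢
      simp only [inv_one, one_mul, reflLen_one, zero_add] at hz1
      have h1 : z.1⁻¹ * (a⁻¹ * b) = (a * z.1)⁻¹ * b := by group
      rw [h1] at hz2
      have k1 := reflLen_mul_le cs a z.1
      have k2 := reflLen_mul_le cs (a * z.1) ((a * z.1)⁻¹ * b)
      rw [show a * z.1 * ((a * z.1)⁻¹ * b) = b by group] at k2
      omega
    · intro z; ext; simp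
    · intro z; ext; simp
    · intro x y
      have hx1 := x.2.1; have hx2 := x.2.2
      have hy1 := y.2.1; have hy2 := y.2.2
      simp only [Equiv.coe_fn_mk]
      unfold absLe at hx1 hx2 hy1 hy2 ⊢
      have h1 : (a⁻¹ * x.1)⁻¹ * (a⁻¹ * y.1) = x.1⁻¹ * y.1 := by group
      rw [h1]
      have k1 := reflLen_mul_le cs a (a⁻¹ * x.1)
      have k2 := reflLen_mul_le cs a (a⁻¹ * y.1)
      rw [show a * (a⁻¹ * x.1) = x.1 by group] at k1
      rw [show a * (a⁻¹ * y.1) = y.1 by group] at k2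
      omega
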